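/- Let C be a covering of U and I_C ⊆ D(U, C) satisfying (CI1) and (CI2). Then (U, I_C) is a rough matroid based on C (i.e., also satisfies (CI3)) if and only if for every definable set D ∈ D(U, C), all maximal elements of {I ∈ I_C : I ⊆ D} have the same cardinality. -/

import Mathlib

variable {α : Type*}

/-- `C` is a covering of `U`: every member is nonempty and their union is `U`. -/
def IsCovering (U : Set α) (C : Set (Set α)) : Prop :=
  (∀ K ∈ C, K.Nonempty) ∧ ⋃₀ C = U

/-- The neighborhood of `x`: intersection of all members of `C` containing `x`. -/
def nbhd (C : Set (Set α)) (x : α) : Set α :=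
  ⋂₀ {K | K ∈ C ∧ x ∈ K}

/-- `X` is definable w.r.t. `C` if it is the union of the neighborhoods of its points. -/
def Definable (C : Set (Set α)) (X : Set α) : Prop :=
  X = ⋃ x ∈ X, nbhd C x

/-- The family of all definable subsets of `U` w.r.t. `C`. -/
def DefinableSets (U : Set α) (C : Set (Set α)) : Set (Set α) :=
  {X | X ⊆ U ∧ Definable C X}

/-- Covering-based lower approximation. -/
def lowerApprox (U : Set α) (C : Set (Set α)) (X : Set α) : Set α :=
  {x ∈ U | nbhd C x ⊆ X}

/-- Covering-based upper approximation. -/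
def upperApprox (U : Set α) (C : Set (Set α)) (X : Set α) : Set α :=
  {x ∈ U | (nbhd C x ∩ X).Nonempty}

/-- Rough matroid based on a covering `C` of `U`. -/
def RoughMatroid (U : Set α) (C : Set (Set α)) (I : Set (Set α)) : Prop :=
  I ⊆ DefinableSets U C ∧
  ∅ ∈ I ∧
  (∀ I₀ ∈ I, ∀ I', I' ⊆ I₀ → I' ∈ DefinableSets U C → I' ∈ I) ∧
  (∀ I₁ ∈ I, ∀ I₂ ∈ I, I₁.ncard < I₂.ncard →
    ∃ I₀ ∈ I, I₁ ⊂ I₀ ∧ I₀ ⊆ I₁ ∪ I₂)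

/-- Matroid independence axioms (I1)-(I3). -/
def MatroidInd (I : Set (Set α)) : Prop :=
  ∅ ∈ I ∧
  (∀ X ∈ I, ∀ Y, Y ⊆ X → Y ∈ I) ∧
  (∀ I₁ ∈ I, ∀ I₂ ∈ I, I₁.ncard < I₂.ncard →
    ∃ e ∈ I₂ \ I₁, insert e I₁ ∈ I)

/-!
If two maximal independent subsets of a definable set `D` had different sizes, augmenting the
smaller one from the larger would stay inside `D` and contradict its maximality. Conversely, for
independent `I₁`, `I₂` with `|I₁| < |I₂|`, the set `I₁ ∪ I₂` is definable; extending `I₁` and `I₂`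
to maximal independent subsets `A ⊇ I₁` and `B ⊇ I₂` of it gives `|I₁| < |I₂| ≤ |B| = |A|`, so `A`
is the required proper augmentation of `I₁`.
-/

lemma mem_nbhd_self (C : Set (Set α)) (x : α) : x ∈ nbhd C x :=
  fun _ hK => hK.2

lemma definable_iff_forall_nbhd_subset {C : Set (Set α)} {X : Set α} :
    Definable C X ↔ ∀ x ∈ X, nbhd C x ⊆ X := by
  constructor
  · intro h x hx
    rw [h]
    exact Set.subset_biUnion_of_mem hx
  · intro h
    exact (Set.iUnion₂_subset h).antisymm' fun x hx => Set.mem_biUnion hx (mem_nbhd_self C x)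

lemma Definable.union {C : Set (Set α)} {X Y : Set α}
    (hX : Definable C X) (hY : Definable C Y) : Definable C (X ∪ Y) := by
  rw [definable_iff_forall_nbhd_subset] at *
  rintro x (hx | hx)
  · exact (hX x hx).trans Set.subset_union_left
  · exact (hY x hx).trans Set.subset_union_right

lemma union_mem_definableSets {U : Set α} {C : Set (Set α)} {X Y : Set α}
    (hX : X ∈ DefinableSets U C) (hY : Y ∈ DefinableSets U C) :
    X ∪ Y ∈ DefinableSets U C :=
  ⟨Set.union_subset hX.1 hY.1, hX.2.union hY.2⟩

lemma maximal_mem_and_subset_iff {I : Set (Set α)} {D A : Set α} :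
    Maximal (fun J => J ∈ I ∧ J ⊆ D) A ↔
      A ∈ I ∧ A ⊆ D ∧ ∀ A' ∈ I, A' ⊆ D → A ⊆ A' → A = A' := by
  refine ⟨fun h => ⟨h.prop.1, h.prop.2, fun A' hA' hA'D => h.eq_of_subset ⟨hA', hA'D⟩⟩,
    fun ⟨hA, hAD, hmax⟩ => ⟨⟨hA, hAD⟩, fun A' ⟨hA', hA'D⟩ hAA' => (hmax A' hA' hA'D hAA').ge⟩⟩

section Augmentation

variable {I : Set (Set α)}

/-- The augmentation axiom (CI3) of a rough matroid. -/
def AugmentationProperty (I : Set (Set α)) : Prop :=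
  ∀ I₁ ∈ I, ∀ I₂ ∈ I, I₁.ncard < I₂.ncard → ∃ I₀ ∈ I, I₁ ⊂ I₀ ∧ I₀ ⊆ I₁ ∪ I₂

lemma AugmentationProperty.ncard_le_of_maximal (h : AugmentationProperty I) {D A B : Set α}
    (hA : Maximal (fun J => J ∈ I ∧ J ⊆ D) A) (hB : Maximal (fun J => J ∈ I ∧ J ⊆ D) B) :
    B.ncard ≤ A.ncard := by
  by_contra! hlt
  obtain ⟨I₀, hI₀, hAI₀, hI₀AB⟩ := h A hA.prop.1 B hB.prop.1 hlt
  have hI₀D : I₀ ⊆ D := hI₀AB.trans (Set.union_subset hA.prop.2 hB.prop.2)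
  exact hAI₀.ne (hA.eq_of_subset ⟨hI₀, hI₀D⟩ hAI₀.subset)

lemma AugmentationProperty.ncard_eq_of_maximal (h : AugmentationProperty I) {D A B : Set α}
    (hA : Maximal (fun J => J ∈ I ∧ J ⊆ D) A) (hB : Maximal (fun J => J ∈ I ∧ J ⊆ D) B) :
    A.ncard = B.ncard :=
  (h.ncard_le_of_maximal hB hA).antisymm (h.ncard_le_of_maximal hA hB)

variable {U : Set α}

lemma exists_superset_maximal_of_subset_finite (hU : U.Finite) (hI : ∀ J ∈ I, J ⊆ U)
    {D E : Set α} (hE : E ∈ I) (hED : E ⊆ D) :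
    ∃ A, E ⊆ A ∧ Maximal (fun J => J ∈ I ∧ J ⊆ D) A :=
  (hU.finite_subsets.subset fun J (hJ : J ∈ I ∧ J ⊆ D) => hI J hJ.1).exists_le_maximal ⟨hE, hED⟩

lemma augmentationProperty_of_maximal_ncard_eq (hU : U.Finite) (hI : ∀ J ∈ I, J ⊆ U)
    (h : ∀ I₁ ∈ I, ∀ I₂ ∈ I, ∀ A B : Set α,
      Maximal (fun J => J ∈ I ∧ J ⊆ I₁ ∪ I₂) A → Maximal (fun J => J ∈ I ∧ J ⊆ I₁ ∪ I₂) B →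
        A.ncard = B.ncard) :
    AugmentationProperty I := by
  intro I₁ hI₁ I₂ hI₂ hlt
  obtain ⟨A, hI₁A, hA⟩ :=
    exists_superset_maximal_of_subset_finite hU hI hI₁ (Set.subset_union_left (t := I₂))
  obtain ⟨B, hI₂B, hB⟩ :=
    exists_superset_maximal_of_subset_finite hU hI hI₂ (Set.subset_union_right (s := I₁))
  have hAB : A.ncard = B.ncard := h I₁ hI₁ I₂ hI₂ A B hA hB
  have hI₂B_card : I₂.ncard ≤ B.ncard := Set.ncard_le_ncard hI₂B (hU.subset (hI B hB.prop.1))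
  refine ⟨A, hA.prop.1, hI₁A.ssubset_of_ne ?_, hA.prop.2⟩
  rintro rfl
  omega

end Augmentation

theorem roughMatroid_iff_maximal_same_card_general {U : Set α} {C : Set (Set α)}
    (hU : U.Finite) {I : Set (Set α)}
    (hsub : I ⊆ DefinableSets U C)
    (h1 : ∅ ∈ I)
    (h2 : ∀ I₀ ∈ I, ∀ I', I' ⊆ I₀ → I' ∈ DefinableSets U C → I' ∈ I) :
    RoughMatroid U C I ↔
      ∀ D ∈ DefinableSets U C, ∀ A B : Set α,
        (A ∈ I ∧ A ⊆ D ∧ ∀ A' ∈ I, A' ⊆ D → A ⊆ A' → A = A') →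
        (B ∈ I ∧ B ⊆ D ∧ ∀ B' ∈ I, B' ⊆ D → B ⊆ B' → B = B') →
        A.ncard = B.ncard := by
  simp only [← maximal_mem_and_subset_iff]
  constructor
  · rintro ⟨-, -, -, h3⟩ D - A B hA hB
    exact AugmentationProperty.ncard_eq_of_maximal h3 hA hB
  · intro hmax
    refine ⟨hsub, h1, h2, augmentationProperty_of_maximal_ncard_eq hU (fun J hJ => (hsub hJ).1) ?_⟩
    intro I₁ hI₁ I₂ hI₂
    exact hmax _ (union_mem_definableSets (hsub hI₁) (hsub hI₂))

theorem roughMatroid_iff_maximal_same_card {U : Set α} {C : Set (Set α)}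
    (hU : U.Finite) (hC : IsCovering U C) {I : Set (Set α)}
    (hsub : I ⊆ DefinableSets U C)
    (h1 : ∅ ∈ I)
    (h2 : ∀ I₀ ∈ I, ∀ I', I' ⊆ I₀ → I' ∈ DefinableSets U C → I' ∈ I) :
    RoughMatroid U C I ↔
      ∀ D ∈ DefinableSets U C, ∀ A B : Set α,
        (A ∈ I ∧ A ⊆ D ∧ ∀ A' ∈ I, A' ⊆ D → A ⊆ A' → A = A') →
        (B ∈ I ∧ B ⊆ D ∧ ∀ B' ∈ I, B' ⊆ D → B ⊆ B' → B = B') →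
        A.ncard = B.ncard :=
  roughMatroid_iff_maximal_same_card_general hU hsub h1 h2
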